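/- Let H be a Hilbert space and u : [0,T] → H a solution of u'(t) = A u(t) with A self-adjoint and bounded above. Then t ↦ ‖u(t)‖ is log-convex on [0,T]; in particular ‖u(t)‖ ≤ ‖u(0)‖^{1−t/T} ‖u(T)‖^{t/T} for all t ∈ [0,T]. (Finite-dimensional version: A is a symmetric real matrix, u(t) = e^{tA} u₀.) -/

import Mathlib

open Real Matrix

/-- Logarithmic convexity for the symmetric case (finite-dimensional version): if `A` is a
real symmetric `n×n` matrix and `u(t) = e^{tA} u₀`, then `t ↦ log ‖u(t)‖` is convex on
`[0,T]`; in particular `‖u(t)‖ ≤ ‖u(0)‖^{1−t/T} ‖u(T)‖^{t/T}` for all `t ∈ [0,T]`. -/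
theorem logconvexity_symmetric_matrix {n : ℕ} (A : Matrix (Fin n) (Fin n) ℝ)
    (hA : A.IsSymm) (u₀ : EuclideanSpace ℝ (Fin n)) (T : ℝ) (hT : 0 < T)
    (u : ℝ → EuclideanSpace ℝ (Fin n))
    (hu : ∀ t, u t = Matrix.toEuclideanLin (NormedSpace.exp (t • A)) u₀) :
    ConvexOn ℝ (Set.Icc 0 T) (fun t => Real.log ‖u t‖) ∧
      ∀ t ∈ Set.Icc 0 T, ‖u t‖ ≤ ‖u 0‖ ^ (1 - t / T) * ‖u T‖ ^ (t / T) := by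
  classical
  have hA' : A.IsHermitian := by
    rwa [Matrix.IsHermitian, Matrix.conjTranspose_eq_transpose_of_trivial]
  set U : Matrix (Fin n) (Fin n) ℝ := (hA'.eigenvectorUnitary : Matrix (Fin n) (Fin n) ℝ)
    with hUdef
  set μ : Fin n → ℝ := hA'.eigenvalues with hμdef
  have hU2 : star U * U = 1 := Matrix.mem_unitaryGroup_iff'.mp hA'.eigenvectorUnitary.2
  have hU1 : U * star U = 1 := Matrix.mem_unitaryGroup_iff.mp hA'.eigenvectorUnitary.2
  have hUisUnit : IsUnit U := isUnit_iff_exists.2 ⟨star U, hU1, hU2⟩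
  have hUinv : U⁻¹ = star U := Matrix.inv_eq_left_inv hU2
  have hspec : A = U * Matrix.diagonal μ * star U := by
    have := hA'.spectral_theorem
    simpa using this
  -- the exponential formula
  have hexp : ∀ t : ℝ, NormedSpace.exp (t • A)
      = U * Matrix.diagonal (fun i => Real.exp (t * μ i)) * star U := by
    intro t
    have h1 : t • A = U * Matrix.diagonal (fun i => t * μ i) * U⁻¹ := by
      rw [hUinv, hspec]
      rw [show ∀ (M N P : Matrix (Fin n) (Fin n) ℝ), t • (M * N * P) = M * (t • N) * P by
        intros; rw [mul_smul_comm, smul_mul_assoc]]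
      congr 2
      rw [← Matrix.diagonal_smul]
      rfl
    rw [h1, Matrix.exp_conj U _ hUisUnit, Matrix.exp_diagonal, hUinv]
    congr 2
    funext i
    rw [Pi.exp_def, Real.exp_eq_exp_ℝ]
  set w : Fin n → ℝ := (star U) *ᵥ (WithLp.equiv 2 (Fin n → ℝ) u₀) with hwdef
  have hUnorm : ∀ z : Fin n → ℝ, ∑ i, (U *ᵥ z) i ^ 2 = ∑ i, z i ^ 2 := by
    intro z
    have h1 : ∑ i, (U *ᵥ z) i ^ 2 = (U *ᵥ z) ⬝ᵥ (U *ᵥ z) := by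
      simp [dotProduct, sq]
    have hTU : Uᵀ * U = 1 := by
      rw [← Matrix.conjTranspose_eq_transpose_of_trivial, ← Matrix.star_eq_conjTranspose]
      exact hU2
    have h3 : U *ᵥ z = z ᵥ* Uᵀ := (Matrix.vecMul_transpose U z).symm
    rw [h1, Matrix.dotProduct_mulVec, h3, Matrix.vecMul_vecMul, hTU, Matrix.vecMul_one]
    simp [dotProduct, sq]
  have hnorm : ∀ t : ℝ, ‖u t‖ ^ 2 = ∑ i, (Real.exp (t * μ i) * w i) ^ 2 := by
    intro t
    have hmv : NormedSpace.exp (t • A) *ᵥ (WithLp.equiv 2 (Fin n → ℝ) u₀)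
        = U *ᵥ (fun j => Real.exp (t * μ j) * w j) := by
      rw [hexp t, ← Matrix.mulVec_mulVec, ← Matrix.mulVec_mulVec]
      have hd : (Matrix.diagonal fun i => Real.exp (t * μ i)) *ᵥ
          (star U *ᵥ (WithLp.equiv 2 (Fin n → ℝ)) u₀) = fun j => Real.exp (t * μ j) * w j := by
        funext j
        rw [Matrix.mulVec_diagonal]
      rw [hd]
    rw [hu t, EuclideanSpace.norm_eq, Real.sq_sqrt (by positivity)]
    simp only [Matrix.toEuclideanLin_apply, PiLp.toLp_apply, Real.norm_eq_abs,
      sq_abs]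
    rw [show u₀.ofLp = WithLp.equiv 2 (Fin n → ℝ) u₀ from rfl, hmv]
    exact hUnorm _
  have hsw : ∀ c : ℝ, 0 ≤ c → ∀ e : ℝ, (c ^ 2) ^ e = (c ^ e) ^ 2 := by
    intro c hc e
    rw [← Real.rpow_natCast c 2, ← Real.rpow_mul hc, ← Real.rpow_natCast (c ^ e) 2,
      ← Real.rpow_mul hc, mul_comm]
  have key : ∀ x y a b : ℝ, 0 ≤ a → 0 ≤ b → a + b = 1 →
      ‖u (a * x + b * y)‖ ≤ ‖u x‖ ^ a * ‖u y‖ ^ b := by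
    intro x y a b ha hb hab
    rcases eq_or_lt_of_le ha with rfl | ha'
    · have hb1 : b = 1 := by linarith
      subst hb1
      simp
    rcases eq_or_lt_of_le hb with rfl | hb'
    · have ha1 : a = 1 := by linarith
      subst ha1
      simp
    have hterm : ∀ i, (Real.exp ((a*x+b*y) * μ i) * w i) ^ 2
        = ((Real.exp (x * μ i) * w i) ^ 2) ^ a * ((Real.exp (y * μ i) * w i) ^ 2) ^ b := by
      intro i
      have hc : ((w i ^ 2 : ℝ)) ^ a * (w i ^ 2) ^ b = w i ^ 2 := by
        rw [← Real.rpow_add' (sq_nonneg _) (by rw [hab]; exact one_ne_zero), hab,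
          Real.rpow_one]
      rw [mul_pow, mul_pow, mul_pow, Real.mul_rpow (by positivity) (sq_nonneg _),
        Real.mul_rpow (by positivity) (sq_nonneg _), ← Real.exp_nat_mul, ← Real.exp_nat_mul,
        ← Real.exp_nat_mul, mul_mul_mul_comm, ← Real.exp_mul, ← Real.exp_mul, ← Real.exp_add,
        hc]
      congr 2
      push_cast
      ring
    have hpq : Real.HolderConjugate a⁻¹ b⁻¹ := by
      constructor
      · simp [inv_inv, hab]
      · exact inv_pos.2 ha'
      · exact inv_pos.2 hb'
    have hsum : ∑ i, (Real.exp ((a*x+b*y) * μ i) * w i) ^ 2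
        ≤ (∑ i, (Real.exp (x * μ i) * w i) ^ 2) ^ a
          * (∑ i, (Real.exp (y * μ i) * w i) ^ 2) ^ b := by
      calc ∑ i, (Real.exp ((a*x+b*y) * μ i) * w i) ^ 2
          = ∑ i, ((Real.exp (x * μ i) * w i) ^ 2) ^ a * ((Real.exp (y * μ i) * w i) ^ 2) ^ b :=
            Finset.sum_congr rfl fun i _ => hterm i
        _ ≤ (∑ i, (((Real.exp (x * μ i) * w i) ^ 2) ^ a) ^ (a⁻¹)) ^ (1 / a⁻¹)
            * (∑ i, (((Real.exp (y * μ i) * w i) ^ 2) ^ b) ^ (b⁻¹)) ^ (1 / b⁻¹) :=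
            Real.inner_le_Lp_mul_Lq_of_nonneg Finset.univ hpq (fun i _ => by positivity)
              (fun i _ => by positivity)
        _ = (∑ i, (Real.exp (x * μ i) * w i) ^ 2) ^ a
            * (∑ i, (Real.exp (y * μ i) * w i) ^ 2) ^ b := by
            rw [one_div, inv_inv, one_div, inv_inv]
            congr 2
            · exact Finset.sum_congr rfl fun i _ => by
                rw [← Real.rpow_mul (sq_nonneg _), mul_inv_cancel₀ (ne_of_gt ha'),
                  Real.rpow_one]
            · exact Finset.sum_congr rfl fun i _ => by
                rw [← Real.rpow_mul (sq_nonneg _), mul_inv_cancel₀ (ne_of_gt hb'),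
                  Real.rpow_one]
    have h2 : ‖u (a*x+b*y)‖ ^ 2 ≤ (‖u x‖ ^ a * ‖u y‖ ^ b) ^ 2 := by
      rw [hnorm]
      calc ∑ i, (Real.exp ((a*x+b*y) * μ i) * w i) ^ 2
          ≤ (∑ i, (Real.exp (x * μ i) * w i) ^ 2) ^ a
            * (∑ i, (Real.exp (y * μ i) * w i) ^ 2) ^ b := hsum
        _ = (‖u x‖ ^ 2) ^ a * (‖u y‖ ^ 2) ^ b := by rw [← hnorm x, ← hnorm y]
        _ = (‖u x‖ ^ a * ‖u y‖ ^ b) ^ 2 := by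
            rw [hsw _ (norm_nonneg _) a, hsw _ (norm_nonneg _) b, mul_pow]
    exact (pow_le_pow_iff_left₀ (norm_nonneg _) (by positivity) two_ne_zero).1 h2
  by_cases hw : ∀ i, w i = 0
  · have hz : ∀ t, ‖u t‖ = 0 := by
      intro t
      have h := hnorm t
      simp only [hw, mul_zero] at h
      simp at h
      exact pow_eq_zero_iff two_ne_zero |>.mp (by simpa using h)
    constructor
    · have hfun : (fun t => Real.log ‖u t‖) = fun _ => Real.log 0 :=
        funext fun t => by rw [hz t]
      rw [hfun]
      exact convexOn_const _ (convex_Icc 0 T)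
    · intro t ht
      rw [hz t]
      positivity
  · push_neg at hw
    have hpos : ∀ t, 0 < ‖u t‖ := by
      intro t
      rcases hw with ⟨i, hi⟩
      have hFpos : 0 < ∑ j, (Real.exp (t * μ j) * w j) ^ 2 :=
        Finset.sum_pos' (fun j _ => sq_nonneg _)
          ⟨i, Finset.mem_univ i, by positivity⟩
      nlinarith [hnorm t, norm_nonneg (u t)]
    constructor
    · refine ⟨convex_Icc 0 T, fun x hx y hy a b ha hb hab => ?_⟩
      simp only [smul_eq_mul]
      have h := key x y a b ha hb hab
      calc Real.log ‖u (a*x+b*y)‖ ≤ Real.log (‖u x‖ ^ a * ‖u y‖ ^ b) :=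
            Real.log_le_log (hpos _) h
        _ = a * Real.log ‖u x‖ + b * Real.log ‖u y‖ := by
            rw [Real.log_mul (Real.rpow_pos_of_pos (hpos x) a).ne'
              (Real.rpow_pos_of_pos (hpos y) b).ne', Real.log_rpow (hpos x),
              Real.log_rpow (hpos y)]
    · intro t ht
      obtain ⟨ht0, htT⟩ := ht
      have h1 : 0 ≤ t / T := div_nonneg ht0 hT.le
      have h2 : t / T ≤ 1 := (div_le_one hT).2 htT
      have h := key 0 T (1 - t / T) (t / T) (by linarith) h1 (by ring)
      rwa [show (1 - t / T) * 0 + t / T * T = t by field_simp; ring] at h
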